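/- arXiv:1608.08704 — 3 statements merged into one kernel-verified Lean document; each statement's English description precedes it below -/
import Mathlib

section
/- Let G = (U ⊔ V, E) be a bipartite graph such that every left subset U' ⊆ U with |U'| ≤ s (s ≥ 1) has boundary of size at least c·|U'| with c > 0, where the boundary ∂(U') is the set of right vertices having exactly one neighbour in U'. Then for every U' ⊆ U with |U'| = t ≤ s there is an ordering u₁,…,u_t of U' and right vertices v₁,…,v_t such that vᵢ ∈ N(uᵢ) \ N({u₁,…,u_{i−1}}) for each i. -/
/-- The set of right neighbours of a left set `U'` in a bipartite graph given by
its left-neighbourhood function `N`. -/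
def nbhdSet {α β : Type*} [DecidableEq α] [DecidableEq β]
    (N : α → Finset β) (U' : Finset α) : Finset β :=
  U'.biUnion N

/-- The boundary of `U'`: right vertices having a unique neighbour in `U'`. -/
def bdry {α β : Type*} [DecidableEq α] [DecidableEq β]
    (N : α → Finset β) (U' : Finset α) : Finset β :=
  (U'.biUnion N).filter (fun v => (U'.filter (fun u => v ∈ N u)).card = 1)

/-! A vertex `v` in the boundary of `W` is adjacent to exactly one `u ∈ W`, so `u` may come last
in the ordering, with witness `v`. Since `c > 0`, every nonempty `W` with `|W| ≤ s` has a boundary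
vertex, and peeling `u` off and recursing on `W \ {u}` builds the ordering from the back. -/

section Peeling

open Finset

variable {α β : Type*} {N : α → Finset β}

def IsPeeling (N : α → Finset β) (U' : Finset α) {t : ℕ} (u : Fin t → α) (v : Fin t → β) :
    Prop :=
  Function.Injective u ∧ (∀ i, u i ∈ U') ∧ ∀ i, v i ∈ N (u i) ∧ ∀ j < i, v i ∉ N (u j)

theorem existsUnique_nbr_of_mem_bdry [DecidableEq α] [DecidableEq β] {U' : Finset α} {v : β}
    (hv : v ∈ bdry N U') : ∃! u, u ∈ U' ∧ v ∈ N u := by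
  obtain ⟨u, hu⟩ := card_eq_one.mp (mem_filter.mp hv).2
  have hmem (w : α) : w ∈ U' ∧ v ∈ N w ↔ w = u := by
    rw [← mem_singleton, ← hu, mem_filter]
  exact ⟨u, (hmem u).mpr rfl, fun w => (hmem w).mp⟩

theorem IsPeeling.snoc [DecidableEq α] {U' : Finset α} {t : ℕ} {u : Fin t → α}
    {v : Fin t → β} {u₀ : α} {v₀ : β} (h : IsPeeling N (U'.erase u₀) u v) (hu₀ : u₀ ∈ U')
    (hv₀ : v₀ ∈ N u₀) (hunique : ∀ w ∈ U', v₀ ∈ N w → w = u₀) :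
    IsPeeling N U' (Fin.snoc u u₀ : Fin (t + 1) → α) (Fin.snoc v v₀ : Fin (t + 1) → β) := by
  obtain ⟨hinj, hmem, hnew⟩ := h
  have hne (j : Fin t) : u j ≠ u₀ := ne_of_mem_erase (hmem j)
  refine ⟨Fin.snoc_injective_of_injective hinj ?_, ?_, fun i => ?_⟩
  · rintro ⟨j, hj⟩
    exact hne j hj
  · refine Fin.lastCases ?_ fun i => ?_
    · simpa using hu₀
    · simpa using mem_of_mem_erase (hmem i)
  induction i using Fin.lastCases with
  | last =>
    refine ⟨by simpa using hv₀, fun j hj => ?_⟩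
    obtain ⟨j, rfl⟩ := Fin.exists_castSucc_eq.mpr hj.ne
    simpa using fun hv₀j => hne j (hunique _ (mem_of_mem_erase (hmem j)) hv₀j)
  | cast i =>
    refine ⟨by simpa using (hnew i).1, fun j hj => ?_⟩
    obtain ⟨j, rfl⟩ := Fin.exists_castSucc_eq.mpr (hj.trans (Fin.castSucc_lt_last i)).ne
    simpa using (hnew i).2 j (Fin.castSucc_lt_castSucc_iff.mp hj)

theorem exists_isPeeling_of_bdry_nonempty [DecidableEq α] [DecidableEq β] (U' : Finset α)
    (t : ℕ) (ht : #U' = t) (hbdry : ∀ W ⊆ U', W.Nonempty → (bdry N W).Nonempty) :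
    ∃ u : Fin t → α, ∃ v : Fin t → β, IsPeeling N U' u v := by
  induction t generalizing U' with
  | zero =>
    exact ⟨Fin.elim0, Fin.elim0, Function.injective_of_subsingleton _,
      fun i => i.elim0, fun i => i.elim0⟩
  | succ t ih =>
    obtain ⟨v₀, hv₀⟩ := hbdry U' Subset.rfl (card_pos.mp (by omega))
    obtain ⟨u₀, ⟨hu₀, hv₀u₀⟩, hunique⟩ := existsUnique_nbr_of_mem_bdry hv₀
    obtain ⟨u, v, h⟩ := ih (U'.erase u₀) (by rw [card_erase_of_mem hu₀, ht]; rfl)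
      fun W hW => hbdry W (hW.trans (erase_subset u₀ U'))
    exact ⟨_, _, h.snoc hu₀ hv₀u₀ fun w hw hv₀w => hunique w ⟨hw, hv₀w⟩⟩

end Peeling

theorem peeling_lemma_general {α β : Type*} [DecidableEq α] [DecidableEq β]
    (N : α → Finset β) (s : ℕ) (c : ℝ) (hc : 0 < c)
    (hexp : ∀ U' : Finset α, U'.card ≤ s →
      c * (U'.card : ℝ) ≤ ((bdry N U').card : ℝ))
    (U' : Finset α) (t : ℕ) (ht : U'.card = t) (hts : t ≤ s) :
    ∃ u : Fin t → α, ∃ v : Fin t → β,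
      Function.Injective u ∧ (∀ i, u i ∈ U') ∧
      ∀ i : Fin t, v i ∈ N (u i) ∧ ∀ j : Fin t, j < i → v i ∉ N (u j) := by
  refine exists_isPeeling_of_bdry_nonempty U' t ht fun W hW hne => Finset.card_pos.mp ?_
  have hpos : (0 : ℝ) < c * W.card := mul_pos hc (by exact_mod_cast hne.card_pos)
  exact_mod_cast hpos.trans_le (hexp W ((Finset.card_le_card hW).trans (ht ▸ hts)))

/-- Peeling lemma: in an `(s,c)`-boundary expander with `s ≥ 1` and `c > 0`,
every left set `U'` of size `t ≤ s` admits an ordering `u₁,…,u_t` and right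
vertices `v₁,…,v_t` with `vᵢ ∈ N(uᵢ) \ N({u₁,…,u_{i−1}})`. -/
theorem peeling_lemma {α β : Type*} [DecidableEq α] [DecidableEq β]
    (N : α → Finset β) (s : ℕ) (c : ℝ) (hs : 1 ≤ s) (hc : 0 < c)
    (hexp : ∀ U' : Finset α, U'.card ≤ s →
      c * (U'.card : ℝ) ≤ ((bdry N U').card : ℝ))
    (U' : Finset α) (t : ℕ) (ht : U'.card = t) (hts : t ≤ s) :
    ∃ u : Fin t → α, ∃ v : Fin t → β,
      Function.Injective u ∧ (∀ i, u i ∈ U') ∧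
      ∀ i : Fin t, v i ∈ N (u i) ∧ ∀ j : Fin t, j < i → v i ∉ N (u j) :=
  peeling_lemma_general N s c hc hexp U' t ht hts
end

section
/- Let G = (U ⊔ V, E) be a bipartite graph with left degree at most Δ. For any left subset U' ⊆ U, the number of right neighbours of U' that are not in the boundary of U' is at most (Δ·|U'| − |∂(U')|)/2; consequently |N(U')| ≤ (|∂(U')| + Δ·|U'|)/2. -/
open Finset

section Counting

variable {α β : Type*} [DecidableEq β] (N : α → Finset β) (U' : Finset α)

theorem sum_card_filter_mem_eq_sum_card :
    ∑ v ∈ U'.biUnion N, #(U'.filter fun u => v ∈ N u) = ∑ u ∈ U', #(N u) := by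
  refine (sum_card_bipartiteAbove_eq_sum_card_bipartiteBelow (s := U') (t := U'.biUnion N)
    (r := fun u v => v ∈ N u)).symm.trans (sum_congr rfl fun u hu => congrArg card ?_)
  show (U'.biUnion N).filter (· ∈ N u) = N u
  rw [filter_mem_eq_inter, inter_eq_right.mpr (subset_biUnion_of_mem N hu)]

theorem one_le_card_filter_mem_of_mem_biUnion {v : β} (hv : v ∈ U'.biUnion N) :
    1 ≤ #(U'.filter fun u => v ∈ N u) := by
  obtain ⟨u, hu, hvu⟩ := mem_biUnion.mp hv
  exact card_pos.mpr ⟨u, mem_filter.mpr ⟨hu, hvu⟩⟩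

variable [DecidableEq α]

theorem two_le_card_filter_mem_of_mem_sdiff_bdry {v : β} (hv : v ∈ U'.biUnion N \ bdry N U') :
    2 ≤ #(U'.filter fun u => v ∈ N u) := by
  obtain ⟨hvN, hvB⟩ := mem_sdiff.mp hv
  have hne : #(U'.filter fun u => v ∈ N u) ≠ 1 := fun h => hvB (mem_filter.mpr ⟨hvN, h⟩)
  have := one_le_card_filter_mem_of_mem_biUnion N U' hvN
  omega

theorem card_bdry_add_two_mul_card_sdiff_bdry_le_sum_card :
    #(bdry N U') + 2 * #(U'.biUnion N \ bdry N U') ≤ ∑ u ∈ U', #(N u) := by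
  set m : β → ℕ := fun v => #(U'.filter fun u => v ∈ N u)
  have hbdry : ∑ v ∈ bdry N U', m v = #(bdry N U') :=
    (sum_congr rfl fun v hv => (mem_filter.mp hv).2).trans (card_eq_sum_ones _).symm
  have hrest : 2 * #(U'.biUnion N \ bdry N U') ≤ ∑ v ∈ U'.biUnion N \ bdry N U', m v := by
    rw [mul_comm, ← smul_eq_mul]
    exact card_nsmul_le_sum _ _ _ fun v hv => two_le_card_filter_mem_of_mem_sdiff_bdry N U' hv
  calc #(bdry N U') + 2 * #(U'.biUnion N \ bdry N U')
      ≤ ∑ v ∈ bdry N U', m v + ∑ v ∈ U'.biUnion N \ bdry N U', m v := by omega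
    _ = ∑ v ∈ U'.biUnion N, m v := by
      rw [add_comm]; exact sum_sdiff (s₁ := bdry N U') (filter_subset _ _)
    _ = ∑ u ∈ U', #(N u) := sum_card_filter_mem_eq_sum_card N U'

end Counting

/-- In a bipartite graph with left degree at most `Δ`, the number of neighbours
of `U'` outside the boundary is at most `(Δ|U'| − |∂(U')|)/2`, and consequently
`|N(U')| ≤ (|∂(U')| + Δ|U'|)/2`. -/
theorem nbhd_card_bound {α β : Type*} [DecidableEq α] [DecidableEq β]
    (N : α → Finset β) (Δ : ℕ) (hdeg : ∀ u : α, (N u).card ≤ Δ)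
    (U' : Finset α) :
    (((U'.biUnion N \ bdry N U').card : ℝ) ≤
        ((Δ : ℝ) * (U'.card : ℝ) - ((bdry N U').card : ℝ)) / 2) ∧
      (((U'.biUnion N).card : ℝ) ≤
        (((bdry N U').card : ℝ) + (Δ : ℝ) * (U'.card : ℝ)) / 2) := by
  have hcount : #(bdry N U') + 2 * #(U'.biUnion N \ bdry N U') ≤ Δ * #U' :=
    (card_bdry_add_two_mul_card_sdiff_bdry_le_sum_card N U').trans <| by
      rw [mul_comm, ← smul_eq_mul]
      exact sum_le_card_nsmul _ _ _ fun u _ => hdeg u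
  have hsplit : #(U'.biUnion N \ bdry N U') + #(bdry N U') = #(U'.biUnion N) :=
    card_sdiff_add_card_eq_card (filter_subset _ _)
  have hcountℝ : (#(bdry N U') : ℝ) + 2 * #(U'.biUnion N \ bdry N U') ≤ Δ * #U' := by
    exact_mod_cast hcount
  have hsplitℝ : (#(U'.biUnion N \ bdry N U') : ℝ) + #(bdry N U') = #(U'.biUnion N) := by
    exact_mod_cast hsplit
  constructor <;> linarith
end

section
/- There is an absolute constant Δ₀ ∈ ℕ such that for all integers Δ, s, and n satisfying Δ ≥ Δ₀ and (sΔ)^{2Δ} ≤ n, there exists a bipartite graph with n left vertices and ⌈n^{3/Δ}⌉ right vertices, left degree at most Δ, that is an (s,2)-boundary expander. -/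
/-!
Let each left vertex choose its `Δ` neighbours by a function `Fin Δ → Fin m`, where
`m = ⌈n^{3/Δ}⌉`, so that `n^3 ≤ m^Δ`. Double counting the edges leaving `U` shows that
`|∂U| < 2|U| = 2k` forces `|N(U)| ≤ t = ⌊((Δ + 2)k - 1)/2⌋`, so all `Δk` choices made by `U` land
in one `t`-set `T`. A union bound over `k ≤ s`, `U` and `T` bounds the number of bad choices by
`∑ₖ C(n,k) C(m,t) t^{Δk} m^{Δ(n-k)}`. As `C(m,t) t^t ≤ (3m)^t`, only `t^{Δk-t} ≤ (sΔ)^{Δk-t}` is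
left to pay for, out of `m^{Δk-t} ≥ n^{3(Δk-t)/Δ}` with `Δk - t ≥ Δk/2 - k`; since `n ≥ (sΔ)^{2Δ}`
and `Δ ≥ 3^7`, each term is at most `m^{Δn}/2s`, so fewer than half of all choices are bad.
-/

open Finset

section Boundary

variable {α β : Type*} [DecidableEq α] [DecidableEq β]

theorem two_mul_card_biUnion_le_sum_card_add_card_bdry (N : α → Finset β) (U : Finset α) :
    2 * #(U.biUnion N) ≤ ∑ u ∈ U, #(N u) + #(bdry N U) := by
  set Γ := U.biUnion N
  set d : β → ℕ := fun v => #{u ∈ U | v ∈ N u}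
  have hdouble : ∑ u ∈ U, #(N u) = ∑ v ∈ Γ, d v :=
    calc ∑ u ∈ U, #(N u) = ∑ u ∈ U, #(Γ.bipartiteAbove (fun u v => v ∈ N u) u) := by
          refine sum_congr rfl fun u hu => ?_
          rw [bipartiteAbove, filter_mem_eq_inter, inter_eq_right.mpr (subset_biUnion_of_mem N hu)]
      _ = ∑ v ∈ Γ, d v := sum_card_bipartiteAbove_eq_sum_card_bipartiteBelow _
  have hpoint : ∀ v ∈ Γ, 2 ≤ d v + if d v = 1 then 1 else 0 := by
    intro v hv
    obtain ⟨u, hu, hvu⟩ := mem_biUnion.mp hv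
    have : 0 < d v := card_pos.mpr ⟨u, mem_filter.mpr ⟨hu, hvu⟩⟩
    split_ifs <;> omega
  calc 2 * #Γ = ∑ _v ∈ Γ, 2 := by rw [sum_const, smul_eq_mul, mul_comm]
    _ ≤ ∑ v ∈ Γ, (d v + if d v = 1 then 1 else 0) := sum_le_sum hpoint
    _ = ∑ u ∈ U, #(N u) + #(bdry N U) := by rw [sum_add_distrib, hdouble, bdry, card_filter]

theorem two_mul_card_biUnion_lt_of_card_bdry_lt {N : α → Finset β} {U : Finset α} {Δ : ℕ}
    (hN : ∀ u ∈ U, #(N u) ≤ Δ) (hU : #(bdry N U) < 2 * #U) :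
    2 * #(U.biUnion N) < (Δ + 2) * #U := by
  have hsum : ∑ u ∈ U, #(N u) ≤ #U * Δ := by simpa using sum_le_card_nsmul U _ Δ hN
  have := two_mul_card_biUnion_le_sum_card_add_card_bdry N U
  linarith

end Boundary

theorem exists_forall_mem_of_card_bdry_lt {ι κ β : Type*} [DecidableEq ι] [Fintype κ]
    [Fintype β] [DecidableEq β] (f : ι → κ → β) {U : Finset ι} {t : ℕ}
    (hU : #(bdry (fun u => univ.image (f u)) U) < 2 * #U)
    (ht : (Fintype.card κ + 2) * #U ≤ 2 * t + 2) (htβ : t ≤ Fintype.card β) :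
    ∃ T : Finset β, #T = t ∧ ∀ u ∈ U, ∀ i, f u i ∈ T := by
  have hΓ :=
    two_mul_card_biUnion_lt_of_card_bdry_lt (fun u _ => card_image_le.trans card_univ.le) hU
  obtain ⟨T, hΓT, hT⟩ :=
    exists_superset_card_eq (s := U.biUnion fun u => univ.image (f u)) (by omega) htβ
  exact ⟨T, hT, fun u hu i => hΓT (mem_biUnion.mpr ⟨u, hu, mem_image_of_mem _ (mem_univ i)⟩)⟩

theorem card_filter_forall_mem_eq {ι κ β : Type*} [Fintype ι] [DecidableEq ι] [Fintype κ]
    [DecidableEq κ] [Fintype β] [DecidableEq β] (U : Finset ι) (T : Finset β) :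
    #{f : ι → κ → β | ∀ u ∈ U, ∀ i, f u i ∈ T} =
      #T ^ (Fintype.card κ * #U) * Fintype.card β ^ (Fintype.card κ * (Fintype.card ι - #U)) := by
  have : ({f : ι → κ → β | ∀ u ∈ U, ∀ i, f u i ∈ T} : Finset _) =
      Fintype.piFinset fun u => if u ∈ U then Fintype.piFinset fun (_ : κ) => T else univ := by
    ext f
    simp only [mem_filter, mem_univ, true_and, Fintype.mem_piFinset]
    refine forall_congr' fun u => ?_
    split_ifs with hu <;> simp [hu]
  rw [this, Fintype.card_piFinset]
  simp only [apply_ite card, Fintype.card_piFinset, prod_const, card_univ, prod_ite]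
  simp [← compl_filter, ← card_compl, pow_mul]

theorem card_filter_exists_card_bdry_lt_le {n Δ m s : ℕ} (t : ℕ → ℕ)
    (ht : ∀ k, 1 ≤ k → k ≤ s → (Δ + 2) * k ≤ 2 * t k + 2 ∧ t k ≤ m) :
    #{f : Fin n → Fin Δ → Fin m |
        ∃ U : Finset (Fin n), #U ≤ s ∧ #(bdry (fun u => univ.image (f u)) U) < 2 * #U} ≤
      ∑ k ∈ Icc 1 s, n.choose k * (m.choose (t k) * (t k ^ (Δ * k) * m ^ (Δ * (n - k)))) :=
  calc _ ≤ #((Icc 1 s).biUnion fun k => (powersetCard k univ).biUnion fun U =>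
        (powersetCard (t k) univ).biUnion fun T =>
          ({f | ∀ u ∈ U, ∀ i, f u i ∈ T} : Finset (Fin n → Fin Δ → Fin m))) := by
        refine card_le_card fun f hf => ?_
        obtain ⟨U, hUs, hU⟩ := (mem_filter.mp hf).2
        have hk : 1 ≤ #U := by omega
        obtain ⟨hUt, htm⟩ := ht #U hk hUs
        obtain ⟨T, hT, hfT⟩ := exists_forall_mem_of_card_bdry_lt f hU (by simpa using hUt)
          (by simpa using htm)
        simp only [mem_biUnion, mem_powersetCard_univ, mem_Icc, mem_filter]
        exact ⟨#U, ⟨hk, hUs⟩, U, rfl, T, hT, mem_univ f, hfT⟩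
    _ ≤ ∑ k ∈ Icc 1 s, ∑ U ∈ powersetCard k univ, ∑ T ∈ powersetCard (t k) univ,
          #({f | ∀ u ∈ U, ∀ i, f u i ∈ T} : Finset (Fin n → Fin Δ → Fin m)) :=
        card_biUnion_le.trans <| sum_le_sum fun k _ =>
          card_biUnion_le.trans <| sum_le_sum fun U _ => card_biUnion_le
    _ = _ := by
        refine sum_congr rfl fun k _ => ?_
        have hcount : ∀ U ∈ powersetCard k univ, ∀ T ∈ powersetCard (t k) univ,
            #({f | ∀ u ∈ U, ∀ i, f u i ∈ T} : Finset (Fin n → Fin Δ → Fin m)) =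
              t k ^ (Δ * k) * m ^ (Δ * (n - k)) := by
          intro U hU T hT
          rw [mem_powersetCard_univ] at hU hT
          convert card_filter_forall_mem_eq (κ := Fin Δ) U T using 3
          all_goals simp [hU, hT]
        rw [sum_congr rfl fun U hU => sum_congr rfl (hcount U hU)]
        simp [card_powersetCard]

theorem choose_mul_pow_self_le (m t : ℕ) : m.choose t * t ^ t ≤ 3 ^ t * m ^ t := by
  have hchoose : (m.choose t : ℝ) ≤ m ^ t / t.factorial := Nat.choose_le_pow_div t m
  have hexp : (t : ℝ) ^ t / t.factorial ≤ 3 ^ t :=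
    calc (t : ℝ) ^ t / t.factorial ≤ Real.exp t := Real.pow_div_factorial_le_exp _ t.cast_nonneg t
      _ = Real.exp 1 ^ t := by rw [← Real.exp_nat_mul, mul_one]
      _ ≤ 3 ^ t := pow_le_pow_left₀ (Real.exp_pos 1).le (by linarith [Real.exp_one_lt_d9]) t
  have : (m.choose t * t ^ t : ℝ) ≤ 3 ^ t * m ^ t :=
    calc (m.choose t * t ^ t : ℝ) ≤ m ^ t / t.factorial * t ^ t := by gcongr
      _ = m ^ t * (t ^ t / t.factorial) := by ring
      _ ≤ m ^ t * 3 ^ t := by gcongr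
      _ = 3 ^ t * m ^ t := mul_comm _ _
  exact_mod_cast this

theorem pow_mul_three_pow_mul_pow_succ_le_pow {Δ x n m k e : ℕ} (hΔ : 3 ^ 7 ≤ Δ) (hΔx : Δ ≤ x)
    (hn : x ^ (2 * Δ) ≤ n) (hm : n ^ 3 ≤ m ^ Δ) (he : 15 * (Δ * k) + 7 ≤ 35 * e) :
    n ^ k * 3 ^ (Δ * k) * x ^ (e + 1) ≤ m ^ e := by
  set a := Δ * k
  -- the power of `n` left over after paying for `n ^ k` and `x ^ (e + 1)`
  set c := 5 * e - 2 * a - 1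
  have hac : a ≤ 7 * c := by omega
  have hthree : 3 ^ (a * (2 * Δ)) ≤ n ^ c :=
    calc 3 ^ (a * (2 * Δ)) ≤ 3 ^ (7 * c * (2 * Δ)) := by gcongr; norm_num
      _ = ((3 ^ 7) ^ (2 * Δ)) ^ c := by rw [← pow_mul, ← pow_mul]; congr 1; ring
      _ ≤ (x ^ (2 * Δ)) ^ c := by gcongr; exact hΔ.trans hΔx
      _ ≤ n ^ c := by gcongr
  rw [← Nat.pow_le_pow_iff_left (by omega : 2 * Δ ≠ 0)]
  calc (n ^ k * 3 ^ a * x ^ (e + 1)) ^ (2 * Δ)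
      = n ^ (2 * a) * 3 ^ (a * (2 * Δ)) * (x ^ (2 * Δ)) ^ (e + 1) := by ring
    _ ≤ n ^ (2 * a) * n ^ c * n ^ (e + 1) := by gcongr
    _ = (n ^ 3) ^ (2 * e) := by rw [← pow_add, ← pow_add, ← pow_mul]; congr 1; omega
    _ ≤ (m ^ Δ) ^ (2 * e) := by gcongr
    _ = (m ^ e) ^ (2 * Δ) := by ring

theorem two_mul_mul_choose_mul_choose_mul_pow_le {Δ s n m k t : ℕ} (hΔ : 3 ^ 7 ≤ Δ)
    (hks : k ≤ s) (hn : (s * Δ) ^ (2 * Δ) ≤ n) (hm : n ^ 3 ≤ m ^ Δ)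
    (ht : 2 * t < (Δ + 2) * k) :
    2 * s * n.choose k * m.choose t * t ^ (Δ * k) ≤ m ^ (Δ * k) := by
  have hk : 1 ≤ k := Nat.pos_of_ne_zero (by rintro rfl; simp at ht)
  have h14 : 14 * k ≤ Δ * k := Nat.mul_le_mul_right k (by omega)
  have hexpand : (Δ + 2) * k = Δ * k + 2 * k := by ring
  have hks' : Δ * k ≤ s * Δ := by rw [mul_comm Δ]; exact Nat.mul_le_mul_right Δ hks
  obtain ⟨e, he⟩ : ∃ e, Δ * k = t + e := ⟨Δ * k - t, by omega⟩
  calc 2 * s * n.choose k * m.choose t * t ^ (Δ * k)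
      = 2 * s * n.choose k * (m.choose t * t ^ t) * t ^ e := by rw [he]; ring
    _ ≤ (s * Δ) * n ^ k * (3 ^ t * m ^ t) * (s * Δ) ^ e := by
        gcongr ?_ * ?_ * ?_ * ?_
        · rw [mul_comm 2]; exact Nat.mul_le_mul_left s (by omega)
        · exact Nat.choose_le_pow n k
        · exact choose_mul_pow_self_le m t
        · exact Nat.pow_le_pow_left (by omega) e
    _ = n ^ k * 3 ^ t * (s * Δ) ^ (e + 1) * m ^ t := by ring
    _ ≤ n ^ k * 3 ^ (Δ * k) * (s * Δ) ^ (e + 1) * m ^ t := by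
        gcongr
        · norm_num
        · omega
    _ ≤ m ^ e * m ^ t := by
        gcongr
        exact pow_mul_three_pow_mul_pow_succ_le_pow hΔ (Nat.le_mul_of_pos_left Δ (by omega)) hn hm
          (by omega)
    _ = m ^ (Δ * k) := by rw [he, pow_add, mul_comm]

theorem le_of_pow_two_mul_le_of_pow_three_le {x n m Δ : ℕ} (hΔ : Δ ≠ 0)
    (hn : x ^ (2 * Δ) ≤ n) (hm : n ^ 3 ≤ m ^ Δ) : x ≤ m := by
  have : (x ^ 6) ^ Δ ≤ m ^ Δ :=
    calc (x ^ 6) ^ Δ = (x ^ (2 * Δ)) ^ 3 := by ring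
      _ ≤ m ^ Δ := (Nat.pow_le_pow_left hn 3).trans hm
  exact (Nat.le_self_pow (by norm_num) x).trans ((Nat.pow_le_pow_iff_left hΔ).mp this)

theorem two_mul_card_filter_exists_card_bdry_lt_le {Δ s n m : ℕ} (hΔ : 3 ^ 7 ≤ Δ)
    (hn : (s * Δ) ^ (2 * Δ) ≤ n) (hm : n ^ 3 ≤ m ^ Δ) :
    2 * #{f : Fin n → Fin Δ → Fin m |
        ∃ U : Finset (Fin n), #U ≤ s ∧ #(bdry (fun u => univ.image (f u)) U) < 2 * #U} ≤
      m ^ (Δ * n) := by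
  let t : ℕ → ℕ := fun k => ((Δ + 2) * k - 1) / 2
  have hsn : s ≤ n := (Nat.le_mul_of_pos_right s (show 0 < Δ by omega)).trans
    ((Nat.le_self_pow (by omega) _).trans hn)
  have hsΔm : s * Δ ≤ m := le_of_pow_two_mul_le_of_pow_three_le (by omega) hn hm
  have ht : ∀ k, 1 ≤ k → k ≤ s → (Δ + 2) * k ≤ 2 * t k + 2 ∧ t k ≤ m := by
    intro k hk hks
    have h2 : 2 * k ≤ Δ * k := Nat.mul_le_mul_right k (by omega)
    have hks' : Δ * k ≤ s * Δ := by rw [mul_comm Δ]; exact Nat.mul_le_mul_right Δ hks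
    simp only [t, add_mul]
    omega
  have hterm : ∀ k ∈ Icc 1 s,
      2 * s * (n.choose k * (m.choose (t k) * (t k ^ (Δ * k) * m ^ (Δ * (n - k))))) ≤
        m ^ (Δ * n) := by
    intro k hk
    obtain ⟨hk, hks⟩ := mem_Icc.mp hk
    have hpos : 1 ≤ (Δ + 2) * k := Nat.one_le_iff_ne_zero.mpr (by positivity)
    calc 2 * s * (n.choose k * (m.choose (t k) * (t k ^ (Δ * k) * m ^ (Δ * (n - k)))))
        = 2 * s * n.choose k * m.choose (t k) * t k ^ (Δ * k) * m ^ (Δ * (n - k)) := by ring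
      _ ≤ m ^ (Δ * k) * m ^ (Δ * (n - k)) := Nat.mul_le_mul_right _
          (two_mul_mul_choose_mul_choose_mul_pow_le hΔ hks hn hm (by simp only [t]; omega))
      _ = m ^ (Δ * n) := by rw [← pow_add, ← mul_add, Nat.add_sub_cancel' (hks.trans hsn)]
  have hbad := card_filter_exists_card_bdry_lt_le (n := n) t ht
  rcases s.eq_zero_or_pos with rfl | hs
  · rw [Icc_eq_empty (by norm_num), sum_empty] at hbad
    omega
  refine Nat.le_of_mul_le_mul_left ?_ hs
  calc s * (2 * #_) = 2 * s * #_ := by ring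
    _ ≤ ∑ k ∈ Icc 1 s, 2 * s *
        (n.choose k * (m.choose (t k) * (t k ^ (Δ * k) * m ^ (Δ * (n - k))))) := by
      rw [← mul_sum]; exact Nat.mul_le_mul_left _ hbad
    _ ≤ ∑ _k ∈ Icc 1 s, m ^ (Δ * n) := sum_le_sum hterm
    _ = s * m ^ (Δ * n) := by simp

theorem exists_forall_two_mul_card_le_card_bdry {Δ s n m : ℕ} (hΔ : 3 ^ 7 ≤ Δ)
    (hn : (s * Δ) ^ (2 * Δ) ≤ n) (hm : n ^ 3 ≤ m ^ Δ) :
    ∃ f : Fin n → Fin Δ → Fin m, ∀ U : Finset (Fin n), #U ≤ s →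
      2 * #U ≤ #(bdry (fun u => univ.image (f u)) U) := by
  have hbad := two_mul_card_filter_exists_card_bdry_lt_le hΔ hn hm
  have hM : 0 < m ^ (Δ * n) := by
    rcases m.eq_zero_or_pos with rfl | hm0
    · obtain rfl : n = 0 := by simpa [Nat.zero_pow (show 0 < Δ by omega)] using hm
      simp
    · positivity
  by_contra! hall
  rw [filter_true_of_mem fun f _ => hall f, card_univ, Fintype.card_fun, Fintype.card_fun,
    Fintype.card_fin, Fintype.card_fin, Fintype.card_fin, ← pow_mul] at hbad
  omega

theorem pow_le_ceil_rpow_div_pow (n p Δ : ℕ) (hΔ : Δ ≠ 0) :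
    n ^ p ≤ ⌈(n : ℝ) ^ ((p : ℝ) / Δ)⌉₊ ^ Δ := by
  have hpow : ((n : ℝ) ^ ((p : ℝ) / Δ)) ^ Δ = (n : ℝ) ^ p := by
    rw [← Real.rpow_natCast, ← Real.rpow_mul n.cast_nonneg,
      div_mul_cancel₀ _ (by exact_mod_cast hΔ), Real.rpow_natCast]
  have := pow_le_pow_left₀ (by positivity) (Nat.le_ceil ((n : ℝ) ^ ((p : ℝ) / Δ))) Δ
  rw [hpow] at this
  exact_mod_cast this

/-- There is an absolute constant `Δ₀` such that for all `Δ ≥ Δ₀`, `s`, `n`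
with `(sΔ)^(2Δ) ≤ n` there is a bipartite graph with `n` left vertices,
`⌈n^{3/Δ}⌉` right vertices and left degree at most `Δ` that is an
`(s,2)`-boundary expander. -/
theorem expander_exists :
    ∃ Δ₀ : ℕ, ∀ Δ s n : ℕ, Δ₀ ≤ Δ → (s * Δ) ^ (2 * Δ) ≤ n →
      ∃ N : Fin n → Finset (Fin (⌈(n : ℝ) ^ ((3 : ℝ) / (Δ : ℝ))⌉₊)),
        (∀ u, (N u).card ≤ Δ) ∧
        ∀ U' : Finset (Fin n), U'.card ≤ s →
          2 * U'.card ≤ (bdry N U').card := by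
  refine ⟨3 ^ 7, fun Δ s n hΔ hn => ?_⟩
  have hm := pow_le_ceil_rpow_div_pow n 3 Δ (by omega)
  push_cast at hm
  obtain ⟨f, hf⟩ := exists_forall_two_mul_card_le_card_bdry hΔ hn hm
  exact ⟨fun u => univ.image (f u), fun u => card_image_le.trans (by simp), hf⟩
end
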